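/- Let a₁, a₂ ∈ ℝ and let (z₁, z₂) : I → Ω × Ω be a differentiable solution of the two-point vortex system on an interval I with z₁(t) ≠ z₂(t) for all t ∈ I. Then the total energy H(t) := (1/2)·( a₁²·γ̃_Ω(z₁(t)) + a₂²·γ̃_Ω(z₂(t)) ) + a₁·a₂·( γ_Ω(z₁(t), z₂(t)) + (1/(4π))·ln(|z₁(t) − z₂(t)|²) ) is constant on I. -/

import Mathlib

/-!
The energy `H` is a Hamiltonian for the vortex system. Writing `∇ₓH`, `∇ᵧH` for its partial
gradients, the equations of motion read `a₁ z₁' = i ∇ₓH` and `a₂ z₂' = i ∇ᵧH`, the second one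
because `γ_Ω` is symmetric. Hence along a solution
`H' = Re (conj (∇ₓH) z₁') + Re (conj (∇ᵧH) z₂') = Re (i a₁ |z₁'|²) + Re (i a₂ |z₂'|²) = 0`,
and `H` is constant on the convex set `I`.

The chain rule needs `H` to be differentiable off the diagonal, i.e. `φ' ≠ 0` on `Ω`. This holds
since `φ` is injective: at a zero of `φ'` of order `n - 1 ≥ 1` one can write
`φ = φ(p) + hⁿ` with `h` a local biholomorphism, so `φ` is `n`-to-one near `p`.
-/

open Complex Real

noncomputable section

/-- The gradient of a real-valued function on `ℂ ≅ ℝ²`, identified with the complex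
number `∂₁ f + i·∂₂ f`. -/
def grad (f : ℂ → ℝ) (x : ℂ) : ℂ :=
  (fderiv ℝ f x 1 : ℂ) + (fderiv ℝ f x Complex.I : ℂ) * Complex.I

/-- The regular part of the Green's function of `Ω`, expressed through the conformal map `φ`. -/
def gammaReg (φ : ℂ → ℂ) (x y : ℂ) : ℝ :=
  (1 / (2 * π)) * Real.log (‖φ x - φ y‖ / ‖x - y‖) -
    (1 / (2 * π)) * Real.log (‖1 - φ x * (starRingEnd ℂ) (φ y)‖)

/-- The Robin function of `Ω`. -/
def robin (φ : ℂ → ℂ) (x : ℂ) : ℝ :=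
  (1 / (2 * π)) * Real.log (‖deriv φ x‖) -
    (1 / (2 * π)) * Real.log (1 - ‖φ x‖ ^ 2)

/-- The right-hand side of the Kirchhoff–Routh equation for the vortex located at `w₁`,
with own strength `a₁`, the other vortex being at `w₂` with strength `a₂`. -/
def vortexRHS (φ : ℂ → ℂ) (a₁ a₂ : ℝ) (w₁ w₂ : ℂ) : ℂ :=
  ((a₁ : ℂ) / 2) * (Complex.I * grad (robin φ) w₁) +
    (a₂ : ℂ) * (Complex.I * (w₁ - w₂) / ((2 * π * ‖w₁ - w₂‖ ^ 2 : ℝ) : ℂ) +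
      Complex.I * grad (fun x => gammaReg φ x w₂) w₁)

open Set Filter Topology

lemma re_conj_grad_mul {f : ℂ → ℝ} {x : ℂ} (w : ℂ) :
    (starRingEnd ℂ (grad f x) * w).re = fderiv ℝ f x w := by
  have hw : w = w.re • (1 : ℂ) + w.im • I := by simp
  conv_rhs => rw [hw, map_add, map_smul, map_smul]
  simp [grad, mul_comm]

lemma grad_add {f g : ℂ → ℝ} {x : ℂ} (hf : DifferentiableAt ℝ f x)
    (hg : DifferentiableAt ℝ g x) : grad (fun y => f y + g y) x = grad f x + grad g x := by
  simp only [grad, fderiv_fun_add hf hg, add_apply]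
  push_cast
  ring

lemma grad_const_mul {f : ℂ → ℝ} {x : ℂ} (hf : DifferentiableAt ℝ f x) (c : ℝ) :
    grad (fun y => c * f y) x = c * grad f x := by
  simp only [grad, fderiv_const_mul hf, smul_apply, smul_eq_mul, ofReal_mul]
  ring

lemma grad_add_const (f : ℂ → ℝ) (x : ℂ) (c : ℝ) :
    grad (fun y => f y + c) x = grad f x := by
  simp only [grad, fderiv_add_const]

lemma grad_log_norm_sub_sq {x y : ℂ} (hxy : x ≠ y) :
    grad (fun z => Real.log (‖z - y‖ ^ 2)) x = 2 * (x - y) / ((‖x - y‖ ^ 2 : ℝ) : ℂ) := by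
  have hne : ‖x - y‖ ^ 2 ≠ 0 := by simpa [sub_eq_zero] using hxy
  have h := (((hasFDerivAt_id x).sub_const y).norm_sq).log hne
  simp only [id] at h
  rw [grad, h.fderiv]
  apply Complex.ext <;> simp [Complex.inner, div_eq_inv_mul, mul_comm]

lemma DifferentiableAt.hasDerivWithinAt_uncurry_comp {F : ℂ → ℂ → ℝ} {z₁ z₂ : ℝ → ℂ}
    {u v : ℂ} {s : Set ℝ} {t : ℝ}
    (hF : DifferentiableAt ℝ (Function.uncurry F) (z₁ t, z₂ t))
    (h₁ : HasDerivWithinAt z₁ u s t) (h₂ : HasDerivWithinAt z₂ v s t) :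
    HasDerivWithinAt (fun τ => F (z₁ τ) (z₂ τ))
      ((starRingEnd ℂ (grad (fun x => F x (z₂ t)) (z₁ t)) * u).re +
        (starRingEnd ℂ (grad (fun y => F (z₁ t) y) (z₂ t)) * v).re) s t := by
  have hL := hF.hasFDerivAt
  have hleft : HasFDerivAt (fun x => F x (z₂ t))
      ((fderiv ℝ (Function.uncurry F) (z₁ t, z₂ t)).comp (.inl ℝ ℂ ℂ)) (z₁ t) :=
    hL.comp (f := fun x => (x, z₂ t)) _ (hasFDerivAt_prodMk_left _ _)
  have hright : HasFDerivAt (fun y => F (z₁ t) y)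
      ((fderiv ℝ (Function.uncurry F) (z₁ t, z₂ t)).comp (.inr ℝ ℂ ℂ)) (z₂ t) :=
    hL.comp (f := fun y => (z₁ t, y)) _ (hasFDerivAt_prodMk_right _ _)
  rw [re_conj_grad_mul, re_conj_grad_mul, hleft.fderiv, hright.fderiv]
  refine (hL.comp_hasDerivWithinAt t (h₁.prodMk h₂)).congr_deriv ?_
  simp [← map_add]

lemma AnalyticAt.exists_analyticAt_pow_eq {g : ℂ → ℂ} {p : ℂ} (hg : AnalyticAt ℂ g p)
    (hp : g p ≠ 0) {n : ℕ} (hn : n ≠ 0) :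
    ∃ k : ℂ → ℂ, AnalyticAt ℂ k p ∧ ∀ z, k z ^ n = g z := by
  refine ⟨fun z => g p ^ (n⁻¹ : ℂ) * (g z / g p) ^ (n⁻¹ : ℂ), ?_, fun z => ?_⟩
  · exact analyticAt_const.mul ((hg.div analyticAt_const hp).cpow analyticAt_const
      (by simp [hp]))
  · rw [mul_pow, cpow_nat_inv_pow _ hn, cpow_nat_inv_pow _ hn, mul_div_cancel₀ _ hp]

/-- `h` is open at `p`, and `w`, `ζ * w` have the same `n`-th power for a primitive `n`-th
root of unity `ζ`. -/
lemma not_injOn_of_eventually_eq_add_pow {f h : ℂ → ℂ} {c p : ℂ} {n : ℕ} (hn : 2 ≤ n)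
    (hh : HasStrictDerivAt h c p) (hc : c ≠ 0) (hp : h p = 0)
    (hf : ∀ᶠ z in 𝓝 p, f z = f p + h z ^ n) {U : Set ℂ} (hU : U ∈ 𝓝 p) : ¬ InjOn f U := by
  intro hinj
  set V := {z | z ∈ U ∧ f z = f p + h z ^ n}
  have himg : h '' V ∈ 𝓝 0 := by
    rw [← hp, ← hh.map_nhds_eq hc]
    exact image_mem_map (inter_mem hU hf)
  have hζ := Complex.isPrimitiveRoot_exp n (by omega)
  set ζ := exp (2 * π * I / n)
  have hmul : Tendsto (fun w => ζ * w) (𝓝 0) (𝓝 0) := by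
    simpa using (continuous_const_mul ζ).tendsto 0
  have hev : ∀ᶠ w in 𝓝[≠] (0 : ℂ), (w ∈ h '' V ∧ ζ * w ∈ h '' V) ∧ w ≠ 0 :=
    (((show ∀ᶠ w in 𝓝 0, w ∈ h '' V from himg).and (hmul.eventually himg)).filter_mono
      nhdsWithin_le_nhds).and self_mem_nhdsWithin
  obtain ⟨w, ⟨⟨z₁, hz₁, rfl⟩, z₂, hz₂, hz₂₁⟩, hw⟩ := hev.exists
  have : z₂ = z₁ := hinj hz₂.1 hz₁.1 (by rw [hz₂.2, hz₁.2, hz₂₁, mul_pow, hζ.pow_eq_one, one_mul])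
  subst this
  exact hζ.ne_one (by omega) (mul_left_eq_self₀.mp hz₂₁.symm |>.resolve_right hw)

lemma deriv_ne_zero_of_injOn {f : ℂ → ℂ} {U : Set ℂ} {p : ℂ} (hf : AnalyticAt ℂ f p)
    (hU : U ∈ 𝓝 p) (hinj : InjOn f U) : deriv f p ≠ 0 := by
  intro hd
  have hord := hf.analyticOrderAt_deriv_add_one
  have hd₀ : analyticOrderAt (deriv f) p ≠ 0 := hf.deriv.analyticOrderAt_ne_zero.mpr hd
  cases hn : analyticOrderAt (f · - f p) p with
  | top =>
    have hev : ∀ᶠ z in 𝓝[≠] p, (f z - f p = 0 ∧ z ∈ U) ∧ z ≠ p :=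
      ((analyticOrderAt_eq_top.mp hn).and hU |>.filter_mono nhdsWithin_le_nhds).and
        self_mem_nhdsWithin
    obtain ⟨z, ⟨hz, hzU⟩, hzp⟩ := hev.exists
    exact hzp (hinj hzU (mem_of_mem_nhds hU) (sub_eq_zero.mp hz))
  | coe n =>
    have hn2 : 2 ≤ n := by
      rw [hn] at hord
      cases hm : analyticOrderAt (deriv f) p with
      | top => simp [hm] at hord
      | coe m =>
        rw [hm] at hord hd₀
        norm_cast at hord hd₀
        omega
    obtain ⟨g, hg, hgp, hfg⟩ := ((hf.sub analyticAt_const).analyticOrderAt_eq_natCast).mp hn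
    obtain ⟨k, hk, hkg⟩ := hg.exists_analyticAt_pow_eq hgp (n := n) (by omega)
    have hkp : k p ≠ 0 := fun h => hgp (by rw [← hkg, h, zero_pow (by omega)])
    have hh : HasDerivAt (fun z => (z - p) * k z) (k p) p := by
      simpa using ((hasDerivAt_id p).sub_const p).fun_mul hk.differentiableAt.hasDerivAt
    refine not_injOn_of_eventually_eq_add_pow (h := fun z => (z - p) * k z) hn2
      (((analyticAt_id.sub analyticAt_const).mul hk).hasStrictDerivAt.congr_deriv hh.deriv)
      hkp (by simp) ?_ hU hinj
    filter_upwards [hfg] with z hz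
    rw [Pi.sub_apply, smul_eq_mul] at hz
    rw [mul_pow, hkg, ← hz]
    ring

def hamiltonian (φ : ℂ → ℂ) (a₁ a₂ : ℝ) (x y : ℂ) : ℝ :=
  (1 / 2) * (a₁ ^ 2 * robin φ x + a₂ ^ 2 * robin φ y) +
    a₁ * a₂ * (gammaReg φ x y + (1 / (4 * π)) * Real.log (‖x - y‖ ^ 2))

lemma gammaReg_comm (φ : ℂ → ℂ) (x y : ℂ) : gammaReg φ x y = gammaReg φ y x := by
  have h : ‖1 - φ x * starRingEnd ℂ (φ y)‖ = ‖1 - φ y * starRingEnd ℂ (φ x)‖ := by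
    rw [← Complex.norm_conj]
    simp [mul_comm]
  rw [gammaReg, gammaReg, norm_sub_rev (φ x), norm_sub_rev x, h]

lemma hamiltonian_comm (φ : ℂ → ℂ) (a₁ a₂ : ℝ) (x y : ℂ) :
    hamiltonian φ a₁ a₂ x y = hamiltonian φ a₂ a₁ y x := by
  rw [hamiltonian, hamiltonian, gammaReg_comm φ x, norm_sub_rev x]
  ring

lemma differentiableAt_robin {φ : ℂ → ℂ} {x : ℂ} (hφ : DifferentiableAt ℂ φ x)
    (hφ' : DifferentiableAt ℂ (deriv φ) x) (hd : deriv φ x ≠ 0) (hx : ‖φ x‖ < 1) :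
    DifferentiableAt ℝ (robin φ) x := by
  have h1 : ‖deriv φ x‖ ≠ 0 := norm_ne_zero_iff.mpr hd
  have h2 : 1 - ‖φ x‖ ^ 2 ≠ 0 := by nlinarith [norm_nonneg (φ x)]
  exact ((((hφ'.restrictScalars ℝ).norm ℝ hd).log h1).const_mul _).sub
    (((((hφ.restrictScalars ℝ).norm_sq ℝ).const_sub 1).log h2).const_mul _)

lemma one_sub_mul_conj_ne_zero {a b : ℂ} (ha : ‖a‖ < 1) (hb : ‖b‖ < 1) :
    1 - a * starRingEnd ℂ b ≠ 0 := by
  rw [sub_ne_zero]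
  intro h
  have := congrArg norm h
  rw [norm_one, norm_mul, Complex.norm_conj] at this
  nlinarith [norm_nonneg a, norm_nonneg b]

lemma differentiableAt_uncurry_gammaReg {φ : ℂ → ℂ} {x y : ℂ} (hx : DifferentiableAt ℂ φ x)
    (hy : DifferentiableAt ℂ φ y) (hxy : x ≠ y) (hφxy : φ x ≠ φ y)
    (hden : 1 - φ x * starRingEnd ℂ (φ y) ≠ 0) :
    DifferentiableAt ℝ (Function.uncurry (gammaReg φ)) (x, y) := by
  have hxR : DifferentiableAt ℝ (fun p : ℂ × ℂ => φ p.1) (x, y) :=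
    (hx.restrictScalars ℝ).comp (x, y) differentiableAt_fst
  have hyR : DifferentiableAt ℝ (fun p : ℂ × ℂ => φ p.2) (x, y) :=
    (hy.restrictScalars ℝ).comp (x, y) differentiableAt_snd
  have hn₁ : DifferentiableAt ℝ (fun p : ℂ × ℂ => ‖φ p.1 - φ p.2‖) (x, y) :=
    (hxR.sub hyR).norm ℝ (sub_ne_zero.mpr hφxy)
  have hn₂ : DifferentiableAt ℝ (fun p : ℂ × ℂ => ‖p.1 - p.2‖) (x, y) :=
    (differentiableAt_fst.sub differentiableAt_snd).norm ℝ (sub_ne_zero.mpr hxy)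
  have hn₃ : DifferentiableAt ℝ (fun p : ℂ × ℂ => ‖1 - φ p.1 * starRingEnd ℂ (φ p.2)‖) (x, y) :=
    ((differentiableAt_const _).sub (hxR.mul hyR.star)).norm ℝ hden
  unfold Function.uncurry gammaReg
  fun_prop (disch := simp_all [sub_eq_zero])

lemma differentiableAt_uncurry_hamiltonian {φ : ℂ → ℂ} (a₁ a₂ : ℝ) {x y : ℂ}
    (hRx : DifferentiableAt ℝ (robin φ) x) (hRy : DifferentiableAt ℝ (robin φ) y)
    (hG : DifferentiableAt ℝ (Function.uncurry (gammaReg φ)) (x, y)) (hxy : x ≠ y) :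
    DifferentiableAt ℝ (Function.uncurry (hamiltonian φ a₁ a₂)) (x, y) := by
  have hR₁ : DifferentiableAt ℝ (fun p : ℂ × ℂ => robin φ p.1) (x, y) :=
    hRx.comp (f := Prod.fst) (x, y) differentiableAt_fst
  have hR₂ : DifferentiableAt ℝ (fun p : ℂ × ℂ => robin φ p.2) (x, y) :=
    hRy.comp (f := Prod.snd) (x, y) differentiableAt_snd
  have hlog : DifferentiableAt ℝ (fun p : ℂ × ℂ => Real.log (‖p.1 - p.2‖ ^ 2)) (x, y) := by
    have hne : ‖x - y‖ ^ 2 ≠ 0 := by simpa [sub_eq_zero] using hxy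
    exact ((differentiableAt_fst.sub differentiableAt_snd).norm_sq ℝ).log hne
  unfold Function.uncurry hamiltonian
  fun_prop

lemma grad_hamiltonian_left {φ : ℂ → ℂ} (a₁ a₂ : ℝ) {x y : ℂ}
    (hR : DifferentiableAt ℝ (robin φ) x)
    (hG : DifferentiableAt ℝ (fun x' => gammaReg φ x' y) x) (hxy : x ≠ y) :
    grad (fun x' => hamiltonian φ a₁ a₂ x' y) x = -(I * a₁ * vortexRHS φ a₁ a₂ x y) := by
  have hlog : DifferentiableAt ℝ (fun x' => Real.log (‖x' - y‖ ^ 2)) x := by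
    have hne : ‖x - y‖ ^ 2 ≠ 0 := by simpa [sub_eq_zero] using hxy
    exact ((differentiableAt_id.sub_const y).norm_sq ℝ).log hne
  simp only [hamiltonian]
  rw [grad_add (by fun_prop) (by fun_prop), grad_const_mul (by fun_prop), grad_add_const,
    grad_const_mul hR, grad_const_mul (by fun_prop), grad_add hG (by fun_prop),
    grad_const_mul hlog, grad_log_norm_sub_sq hxy, vortexRHS]
  push_cast
  linear_combination (a₁ * (a₁ / 2 * grad (robin φ) x + a₂ * ((x - y) / (2 * π * ‖x - y‖ ^ 2) +
    grad (fun x' => gammaReg φ x' y) x))) * I_sq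

lemma grad_hamiltonian_right {φ : ℂ → ℂ} (a₁ a₂ : ℝ) {x y : ℂ}
    (hR : DifferentiableAt ℝ (robin φ) y)
    (hG : DifferentiableAt ℝ (fun y' => gammaReg φ y' x) y) (hxy : x ≠ y) :
    grad (fun y' => hamiltonian φ a₁ a₂ x y') y = -(I * a₂ * vortexRHS φ a₂ a₁ y x) := by
  simp_rw [hamiltonian_comm φ a₁ a₂ x]
  exact grad_hamiltonian_left a₂ a₁ hR hG hxy.symm

lemma re_conj_neg_I_mul_mul_self (a : ℝ) (u : ℂ) :
    (starRingEnd ℂ (-(I * a * u)) * u).re = 0 := by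
  have h : starRingEnd ℂ (-(I * a * u)) * u = I * ((a * normSq u : ℝ) : ℂ) := by
    rw [ofReal_mul, ← mul_conj, map_neg, map_mul, map_mul, conj_I, conj_ofReal]
    ring
  rw [h, I_mul_re, ofReal_im, neg_zero]

section ConformalMap

variable {Ω : Set ℂ} {φ : ℂ → ℂ}

lemma differentiableAt_robin_of_mem (hΩ : IsOpen Ω) (hφ : DifferentiableOn ℂ φ Ω)
    (hinj : InjOn φ Ω) (hmaps : MapsTo φ Ω (Metric.ball 0 1)) {x : ℂ} (hx : x ∈ Ω) :
    DifferentiableAt ℝ (robin φ) x := by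
  have han : AnalyticAt ℂ φ x := hφ.analyticAt (hΩ.mem_nhds hx)
  exact differentiableAt_robin han.differentiableAt han.deriv.differentiableAt
    (deriv_ne_zero_of_injOn han (hΩ.mem_nhds hx) hinj) (mem_ball_zero_iff.mp (hmaps hx))

lemma differentiableAt_uncurry_gammaReg_of_mem (hΩ : IsOpen Ω) (hφ : DifferentiableOn ℂ φ Ω)
    (hinj : InjOn φ Ω) (hmaps : MapsTo φ Ω (Metric.ball 0 1)) {x y : ℂ} (hx : x ∈ Ω)
    (hy : y ∈ Ω) (hxy : x ≠ y) :
    DifferentiableAt ℝ (Function.uncurry (gammaReg φ)) (x, y) :=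
  differentiableAt_uncurry_gammaReg (hφ.differentiableAt (hΩ.mem_nhds hx))
    (hφ.differentiableAt (hΩ.mem_nhds hy)) hxy (hinj.ne hx hy hxy)
    (one_sub_mul_conj_ne_zero (mem_ball_zero_iff.mp (hmaps hx)) (mem_ball_zero_iff.mp (hmaps hy)))

lemma hasDerivWithinAt_hamiltonian_zero (hΩ : IsOpen Ω) (hφ : DifferentiableOn ℂ φ Ω)
    (hinj : InjOn φ Ω) (hmaps : MapsTo φ Ω (Metric.ball 0 1)) (a₁ a₂ : ℝ) {z₁ z₂ : ℝ → ℂ}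
    {s : Set ℝ} {t : ℝ} (h₁ : z₁ t ∈ Ω) (h₂ : z₂ t ∈ Ω) (h₁₂ : z₁ t ≠ z₂ t)
    (hz₁ : HasDerivWithinAt z₁ (vortexRHS φ a₁ a₂ (z₁ t) (z₂ t)) s t)
    (hz₂ : HasDerivWithinAt z₂ (vortexRHS φ a₂ a₁ (z₂ t) (z₁ t)) s t) :
    HasDerivWithinAt (fun τ => hamiltonian φ a₁ a₂ (z₁ τ) (z₂ τ)) 0 s t := by
  have hR {x} (hx : x ∈ Ω) := differentiableAt_robin_of_mem hΩ hφ hinj hmaps hx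
  have hG {x y} (hx : x ∈ Ω) (hy : y ∈ Ω) (hxy : x ≠ y) :
      DifferentiableAt ℝ (fun x' => gammaReg φ x' y) x :=
    (differentiableAt_uncurry_gammaReg_of_mem hΩ hφ hinj hmaps hx hy hxy).comp
      (f := fun x' => (x', y)) x (differentiableAt_id.prodMk (differentiableAt_const y))
  have hH := differentiableAt_uncurry_hamiltonian a₁ a₂ (hR h₁) (hR h₂)
    (differentiableAt_uncurry_gammaReg_of_mem hΩ hφ hinj hmaps h₁ h₂ h₁₂) h₁₂
  refine (hH.hasDerivWithinAt_uncurry_comp hz₁ hz₂).congr_deriv ?_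
  rw [grad_hamiltonian_left a₁ a₂ (hR h₁) (hG h₁ h₂ h₁₂) h₁₂,
    grad_hamiltonian_right a₁ a₂ (hR h₂) (hG h₂ h₁ h₁₂.symm) h₁₂,
    re_conj_neg_I_mul_mul_self, re_conj_neg_I_mul_mul_self, add_zero]

end ConformalMap

theorem stmt7_general (Ω : Set ℂ) (φ : ℂ → ℂ) (a₁ a₂ : ℝ)
    (hopen : IsOpen Ω)
    (hdiff : DifferentiableOn ℂ φ Ω)
    (hbij : Set.BijOn φ Ω (Metric.ball 0 1))
    (I : Set ℝ) (hI : Convex ℝ I)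
    (z₁ z₂ : ℝ → ℂ)
    (hsol : ∀ t ∈ I,
      z₁ t ∈ Ω ∧ z₂ t ∈ Ω ∧ z₁ t ≠ z₂ t ∧
        HasDerivWithinAt z₁ (vortexRHS φ a₁ a₂ (z₁ t) (z₂ t)) I t ∧
        HasDerivWithinAt z₂ (vortexRHS φ a₂ a₁ (z₂ t) (z₁ t)) I t) :
    ∀ s ∈ I, ∀ t ∈ I,
      (1 / 2) * (a₁ ^ 2 * robin φ (z₁ s) + a₂ ^ 2 * robin φ (z₂ s)) +
          a₁ * a₂ * (gammaReg φ (z₁ s) (z₂ s) +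
            (1 / (4 * π)) * Real.log (‖z₁ s - z₂ s‖ ^ 2)) =
        (1 / 2) * (a₁ ^ 2 * robin φ (z₁ t) + a₂ ^ 2 * robin φ (z₂ t)) +
          a₁ * a₂ * (gammaReg φ (z₁ t) (z₂ t) +
            (1 / (4 * π)) * Real.log (‖z₁ t - z₂ t‖ ^ 2)) := by
  have hderiv (t : ℝ) (ht : t ∈ I) :
      HasDerivWithinAt (fun τ => hamiltonian φ a₁ a₂ (z₁ τ) (z₂ τ)) 0 I t := by
    obtain ⟨h₁, h₂, h₁₂, hz₁, hz₂⟩ := hsol t ht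
    exact hasDerivWithinAt_hamiltonian_zero hopen hdiff hbij.injOn hbij.mapsTo a₁ a₂
      h₁ h₂ h₁₂ hz₁ hz₂
  intro s hs t ht
  have h := hI.norm_image_sub_le_of_norm_hasDerivWithin_le (C := 0) hderiv (by simp) hs ht
  rw [zero_mul, norm_le_zero_iff, sub_eq_zero] at h
  exact h.symm

/-- **Conservation of the total energy** of the two-point vortex system: along any solution
of the Kirchhoff–Routh system on an interval `I`, the quantity
`H = (1/2)(a₁² γ̃_Ω(z₁) + a₂² γ̃_Ω(z₂)) + a₁a₂(γ_Ω(z₁,z₂) + (1/4π) ln|z₁ − z₂|²)`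
is constant. -/
theorem stmt7 (Ω : Set ℂ) (φ : ℂ → ℂ) (a₁ a₂ : ℝ)
    (hopen : IsOpen Ω) (hne : Ω ≠ Set.univ) (h0 : (0 : ℂ) ∈ Ω)
    (hconn : IsConnected Ω) (hsc : SimplyConnectedSpace ↥Ω)
    (hdiff : DifferentiableOn ℂ φ Ω)
    (hbij : Set.BijOn φ Ω (Metric.ball 0 1))
    (hφ0 : φ 0 = 0)
    (I : Set ℝ) (hI : Convex ℝ I)
    (z₁ z₂ : ℝ → ℂ)
    (hsol : ∀ t ∈ I,
      z₁ t ∈ Ω ∧ z₂ t ∈ Ω ∧ z₁ t ≠ z₂ t ∧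
        HasDerivWithinAt z₁ (vortexRHS φ a₁ a₂ (z₁ t) (z₂ t)) I t ∧
        HasDerivWithinAt z₂ (vortexRHS φ a₂ a₁ (z₂ t) (z₁ t)) I t) :
    ∀ s ∈ I, ∀ t ∈ I,
      (1 / 2) * (a₁ ^ 2 * robin φ (z₁ s) + a₂ ^ 2 * robin φ (z₂ s)) +
          a₁ * a₂ * (gammaReg φ (z₁ s) (z₂ s) +
            (1 / (4 * π)) * Real.log (‖z₁ s - z₂ s‖ ^ 2)) =
        (1 / 2) * (a₁ ^ 2 * robin φ (z₁ t) + a₂ ^ 2 * robin φ (z₂ t)) +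
          a₁ * a₂ * (gammaReg φ (z₁ t) (z₂ t) +
            (1 / (4 * π)) * Real.log (‖z₁ t - z₂ t‖ ^ 2)) :=
  stmt7_general Ω φ a₁ a₂ hopen hdiff hbij I hI z₁ z₂ hsol
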